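/- arXiv:2011.14902 — 3 statements merged into one kernel-verified Lean document; each statement's English description precedes it below -/
import Mathlib

section
/- Let A ⊆ B ⊆ V and j ∈ V \ B in a finite directed graph G. Let C be the set of vertices reachable from j but not reachable from A, and D the set of vertices reachable from j but not reachable from B. Then D ⊆ C and σ_w(A ∪ {j}) − σ_w(A) = Σ_{i ∈ C} w(i) while σ_w(B ∪ {j}) − σ_w(B) = Σ_{i ∈ D} w(i). -/
/-! A vertex is reachable from `insert j S` iff it is reachable from `j` or from `S`. Splitting the
sum defining `σ_w (insert j S)` according to reachability from `S` leaves, besides `σ_w S`, exactly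
the vertices reachable from `j` but not from `S`. -/

open scoped Classical

/-- Total weight of all vertices reachable (via directed paths, possibly of
length zero) from the set `A` in the directed graph with edge relation `E`. -/
noncomputable def sigmaW {V : Type*} [Fintype V] (E : V → V → Prop) (w : V → ℝ)
    (A : Finset V) : ℝ :=
  ∑ v ∈ Finset.univ.filter (fun v => ∃ a ∈ A, Relation.ReflTransGen E a v), w v

theorem Finset.sum_filter_or_eq_add_sum_filter_and_not {α β : Type*} [AddCommMonoid β]
    (s : Finset α) (p q : α → Prop) [DecidablePred p] [DecidablePred q] (f : α → β) :
    ∑ x ∈ s.filter (fun x => p x ∨ q x), f x =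
      ∑ x ∈ s.filter q, f x + ∑ x ∈ s.filter (fun x => p x ∧ ¬ q x), f x := by
  rw [← Finset.sum_filter_add_sum_filter_not _ q, Finset.filter_filter, Finset.filter_filter]
  congr 2
  · exact Finset.filter_congr fun x _ => by tauto
  · exact Finset.filter_congr fun x _ => by tauto

theorem sigmaW_insert_sub {V : Type*} [Fintype V] [DecidableEq V]
    (E : V → V → Prop) (w : V → ℝ) (S : Finset V) (j : V) :
    sigmaW E w (insert j S) - sigmaW E w S =
      ∑ i ∈ Finset.univ.filter (fun v => Relation.ReflTransGen E j v ∧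
        ¬ ∃ a ∈ S, Relation.ReflTransGen E a v), w i := by
  simp only [sigmaW, Finset.exists_mem_insert,
    Finset.sum_filter_or_eq_add_sum_filter_and_not, add_sub_cancel_left]

theorem filter_reach_not_reach_antitone {V : Type*} [Fintype V] (E : V → V → Prop)
    (j : V) {A B : Finset V} (hAB : A ⊆ B) :
    Finset.univ.filter (fun v => Relation.ReflTransGen E j v ∧
        ¬ ∃ b ∈ B, Relation.ReflTransGen E b v) ⊆
      Finset.univ.filter (fun v => Relation.ReflTransGen E j v ∧
        ¬ ∃ a ∈ A, Relation.ReflTransGen E a v) :=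
  Finset.monotone_filter_right _ fun _ _ ⟨hjv, hBv⟩ =>
    ⟨hjv, fun ⟨a, ha, hav⟩ => hBv ⟨a, hAB ha, hav⟩⟩

theorem marginal_gain_eq_sum_general {V : Type*} [Fintype V] [DecidableEq V]
    (E : V → V → Prop) (w : V → ℝ)
    (A B : Finset V) (j : V) (hAB : A ⊆ B) :
    (Finset.univ.filter (fun v => Relation.ReflTransGen E j v ∧
        ¬ ∃ b ∈ B, Relation.ReflTransGen E b v)) ⊆
      (Finset.univ.filter (fun v => Relation.ReflTransGen E j v ∧
        ¬ ∃ a ∈ A, Relation.ReflTransGen E a v)) ∧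
    sigmaW E w (insert j A) - sigmaW E w A =
      ∑ i ∈ Finset.univ.filter (fun v => Relation.ReflTransGen E j v ∧
        ¬ ∃ a ∈ A, Relation.ReflTransGen E a v), w i ∧
    sigmaW E w (insert j B) - sigmaW E w B =
      ∑ i ∈ Finset.univ.filter (fun v => Relation.ReflTransGen E j v ∧
        ¬ ∃ b ∈ B, Relation.ReflTransGen E b v), w i :=
  ⟨filter_reach_not_reach_antitone E j hAB, sigmaW_insert_sub E w A j,
    sigmaW_insert_sub E w B j⟩

/-- Let `A ⊆ B ⊆ V` and `j ∉ B`. Let `C` be the vertices reachable from `j`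
but not from `A`, and `D` the vertices reachable from `j` but not from `B`.
Then `D ⊆ C`, and the marginal gains of adding `j` to `A` (resp. `B`) are
exactly the total weights of `C` (resp. `D`). -/
theorem marginal_gain_eq_sum {V : Type*} [Fintype V] [DecidableEq V]
    (E : V → V → Prop) (w : V → ℝ) (hw : ∀ v, 0 ≤ w v)
    (A B : Finset V) (j : V) (hAB : A ⊆ B) (hj : j ∉ B) :
    (Finset.univ.filter (fun v => Relation.ReflTransGen E j v ∧
        ¬ ∃ b ∈ B, Relation.ReflTransGen E b v)) ⊆
      (Finset.univ.filter (fun v => Relation.ReflTransGen E j v ∧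
        ¬ ∃ a ∈ A, Relation.ReflTransGen E a v)) ∧
    sigmaW E w (insert j A) - sigmaW E w A =
      ∑ i ∈ Finset.univ.filter (fun v => Relation.ReflTransGen E j v ∧
        ¬ ∃ a ∈ A, Relation.ReflTransGen E a v), w i ∧
    sigmaW E w (insert j B) - sigmaW E w B =
      ∑ i ∈ Finset.univ.filter (fun v => Relation.ReflTransGen E j v ∧
        ¬ ∃ b ∈ B, Relation.ReflTransGen E b v), w i :=
  marginal_gain_eq_sum_general E w A B j hAB
end

section
/- Let f be a monotone submodular set function on subsets of a finite set V with f(∅) = 0, and let A_k be the set produced after k steps of the greedy algorithm that at each step adds an element maximizing the marginal gain. Then for any set A* with |A*| ≤ k, f(A_k) ≥ (1 − 1/e) · f(A*); in particular, the greedy algorithm is an e/(e−1) approximation for maximizing f subject to a cardinality constraint. -/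
/-!
Greedy closes a constant fraction of the gap at every step. By submodularity the gain of
adding an optimal set `S` to the current greedy set `B` is at most the sum of the marginal
gains of the elements of `S`, each of which is at most the greedy gain; hence
`f S - f B ≤ k · (greedy gain)` when `#S ≤ k`. So the gap `f S - f (A i)` shrinks by a factor
`1 - 1/k` per step, and after `k` steps it is at most `(1 - 1/k)^k f S ≤ e⁻¹ f S`.
-/

open Finset

section Greedy

variable {V : Type*} [DecidableEq V] {f : Finset V → ℝ}

def IsSubmodular (f : Finset V → ℝ) : Prop :=
  ∀ (A B : Finset V) (j : V), A ⊆ B → j ∉ B → f (insert j B) - f B ≤ f (insert j A) - f A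

theorem monotone_of_le_insert (hmono : ∀ (A : Finset V) (j : V), f A ≤ f (insert j A)) :
    Monotone f := by
  intro A B hAB
  rw [← union_sdiff_of_subset hAB]
  generalize B \ A = S
  induction S using Finset.induction_on with
  | empty => simp
  | insert j S _ ih => rw [union_insert]; exact ih.trans (hmono _ _)

theorem sub_le_sum_marginal_gain (hmono : Monotone f) (hsub : IsSubmodular f) (B S : Finset V) :
    f (B ∪ S) - f B ≤ ∑ j ∈ S, (f (insert j B) - f B) := by
  induction S using Finset.induction_on with
  | empty => simp
  | insert j S hjS ih =>
    have hgain : f (insert j (B ∪ S)) - f (B ∪ S) ≤ f (insert j B) - f B := by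
      by_cases hj : j ∈ B ∪ S
      · rw [insert_eq_of_mem hj, sub_self, sub_nonneg]
        exact hmono (subset_insert j B)
      · exact hsub B (B ∪ S) j subset_union_left hj
    rw [sum_insert hjS, union_insert]
    linarith

theorem sub_le_card_mul_greedy_gain (hmono : Monotone f) (hsub : IsSubmodular f)
    {B : Finset V} {j : V} (hj : ∀ c, f (insert c B) ≤ f (insert j B)) (S : Finset V) :
    f S - f B ≤ #S * (f (insert j B) - f B) :=
  calc f S - f B ≤ f (B ∪ S) - f B := by gcongr; exact hmono subset_union_right
    _ ≤ ∑ c ∈ S, (f (insert c B) - f B) := sub_le_sum_marginal_gain hmono hsub B S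
    _ ≤ ∑ _c ∈ S, (f (insert j B) - f B) := sum_le_sum fun c _ ↦ by linarith [hj c]
    _ = #S * (f (insert j B) - f B) := by rw [sum_const, nsmul_eq_mul]

theorem greedy_gap_le (hmono : Monotone f) (hsub : IsSubmodular f)
    {B : Finset V} {j : V} (hj : ∀ c, f (insert c B) ≤ f (insert j B))
    {S : Finset V} {k : ℕ} (hk : 0 < k) (hcard : #S ≤ k) :
    f S - f (insert j B) ≤ (1 - 1 / k) * (f S - f B) := by
  have hkR : (0 : ℝ) < k := by exact_mod_cast hk
  have hgain : 0 ≤ f (insert j B) - f B := sub_nonneg.2 (hmono (subset_insert j B))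
  have hgap : f S - f B ≤ k * (f (insert j B) - f B) :=
    (sub_le_card_mul_greedy_gain hmono hsub hj S).trans
      (mul_le_mul_of_nonneg_right (by exact_mod_cast hcard) hgain)
  have hdiv : (f S - f B) / k ≤ f (insert j B) - f B := by rwa [div_le_iff₀' hkR]
  calc f S - f (insert j B) = (f S - f B) - (f (insert j B) - f B) := by ring
    _ ≤ (f S - f B) - (f S - f B) / k := by linarith
    _ = (1 - 1 / k) * (f S - f B) := by ring

end Greedy

theorem greedy_submodular_approx_general {V : Type*} [DecidableEq V]
    (f : Finset V → ℝ)
    (hmono : ∀ (A : Finset V) (j : V), f A ≤ f (insert j A))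
    (hsub : ∀ (A B : Finset V) (j : V), A ⊆ B → j ∉ B →
      f (insert j B) - f B ≤ f (insert j A) - f A)
    (hempty : f ∅ = 0)
    (A : ℕ → Finset V) (hA0 : A 0 = ∅)
    (hgreedy : ∀ i, ∃ j, A (i + 1) = insert j (A i) ∧
      ∀ c, f (insert c (A i)) ≤ f (insert j (A i)))
    (k : ℕ) (Astar : Finset V) (hcard : Astar.card ≤ k) :
    (1 - 1 / Real.exp 1) * f Astar ≤ f (A k) := by
  have hf : Monotone f := monotone_of_le_insert hmono
  obtain rfl | hk := Nat.eq_zero_or_pos k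
  · rw [card_eq_zero.mp (Nat.le_zero.mp hcard), hA0, hempty, mul_zero]
  have hk1 : (1 : ℝ) ≤ k := by exact_mod_cast hk
  have hgap : f Astar - f (A k) ≤ (1 - 1 / k) ^ k * (f Astar - f (A 0)) := by
    refine le_geom (u := fun i ↦ f Astar - f (A i)) (sub_nonneg.2 (div_le_one_of_le₀ hk1 k.cast_nonneg)) k fun i _ ↦ ?_
    obtain ⟨j, hA, hj⟩ := hgreedy i
    rw [hA]
    exact greedy_gap_le hf hsub hj hk hcard
  have hexp : (1 - 1 / k : ℝ) ^ k ≤ Real.exp (-1) := Real.one_sub_div_pow_le_exp_neg hk1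
  have hAstar : 0 ≤ f Astar := hempty ▸ hf (empty_subset Astar)
  rw [hA0, hempty, sub_zero] at hgap
  calc (1 - 1 / Real.exp 1) * f Astar = f Astar - Real.exp (-1) * f Astar := by
        rw [Real.exp_neg]; ring
    _ ≤ f Astar - (1 - 1 / k) ^ k * f Astar := by gcongr
    _ ≤ f (A k) := by linarith

/-- Greedy maximization of a monotone submodular set function `f` with
`f(∅) = 0`: after `k` greedy steps, the value is at least `(1 − 1/e)` times the
value of any set of cardinality at most `k`; i.e., greedy is an `e/(e−1)`
approximation algorithm. -/
theorem greedy_submodular_approx {V : Type*} [Fintype V] [DecidableEq V]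
    (f : Finset V → ℝ)
    (hmono : ∀ (A : Finset V) (j : V), f A ≤ f (insert j A))
    (hsub : ∀ (A B : Finset V) (j : V), A ⊆ B → j ∉ B →
      f (insert j B) - f B ≤ f (insert j A) - f A)
    (hempty : f ∅ = 0)
    (A : ℕ → Finset V) (hA0 : A 0 = ∅)
    (hgreedy : ∀ i, ∃ j, A (i + 1) = insert j (A i) ∧
      ∀ c, f (insert c (A i)) ≤ f (insert j (A i)))
    (k : ℕ) (Astar : Finset V) (hcard : Astar.card ≤ k) :
    (1 - 1 / Real.exp 1) * f Astar ≤ f (A k) :=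
  greedy_submodular_approx_general f hmono hsub hempty A hA0 hgreedy k Astar hcard
end

section
/- Let C' ≥ K_s·w̲_I + (K_p − K_s)·w̲_J and C ≤ K_s·w̄_I + (K_p − K_s)·w̄_J with 0 < w̲_I ≤ w̄_I, 0 < w̲_J ≤ w̄_J, and K_s ≤ K_p. Then C · w̲_I · w̲_J ≤ C' · w̄_I · w̄_J, i.e., C/C' ≤ (w̄_I · w̄_J)/(w̲_I · w̲_J). -/
/-! Since `l₁ ≤ u₁` and `l₂ ≤ u₂`, both `u₁·l₁l₂ ≤ l₁·u₁u₂` and `u₂·l₁l₂ ≤ l₂·u₁u₂`, so any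
nonnegative combination `a u₁ + b u₂` of the upper weights, scaled by `l₁l₂`, is dominated by the
same combination `a l₁ + b l₂` of the lower weights scaled by `u₁u₂`. Sandwiching this between the
bounds on `C` and `C'` gives the product form, and dividing gives the ratio form. -/

section OrderedSemiring

variable {α : Type*} [CommSemiring α] [PartialOrder α] [IsOrderedRing α]

theorem combination_mul_le_combination_mul {a b l₁ u₁ l₂ u₂ : α} (ha : 0 ≤ a) (hb : 0 ≤ b)
    (hl₁ : 0 ≤ l₁) (h₁ : l₁ ≤ u₁) (hl₂ : 0 ≤ l₂) (h₂ : l₂ ≤ u₂) :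
    (a * u₁ + b * u₂) * (l₁ * l₂) ≤ (a * l₁ + b * l₂) * (u₁ * u₂) := by
  have hu₁ : 0 ≤ u₁ := hl₁.trans h₁
  have first : u₁ * (l₁ * l₂) ≤ l₁ * (u₁ * u₂) :=
    calc u₁ * (l₁ * l₂) = l₁ * (u₁ * l₂) := by ring
      _ ≤ l₁ * (u₁ * u₂) := mul_le_mul_of_nonneg_left (mul_le_mul_of_nonneg_left h₂ hu₁) hl₁
  have second : u₂ * (l₁ * l₂) ≤ l₂ * (u₁ * u₂) :=
    calc u₂ * (l₁ * l₂) = l₂ * (l₁ * u₂) := by ring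
      _ ≤ l₂ * (u₁ * u₂) :=
        mul_le_mul_of_nonneg_left (mul_le_mul_of_nonneg_right h₁ (hl₂.trans h₂)) hl₂
  calc (a * u₁ + b * u₂) * (l₁ * l₂)
      = a * (u₁ * (l₁ * l₂)) + b * (u₂ * (l₁ * l₂)) := by rw [add_mul, mul_assoc, mul_assoc]
    _ ≤ a * (l₁ * (u₁ * u₂)) + b * (l₂ * (u₁ * u₂)) :=
        add_le_add (mul_le_mul_of_nonneg_left first ha) (mul_le_mul_of_nonneg_left second hb)
    _ = (a * l₁ + b * l₂) * (u₁ * u₂) := by rw [add_mul, mul_assoc, mul_assoc]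

end OrderedSemiring

theorem div_le_div_of_mul_le_mul {α : Type*} [Field α] [LinearOrder α] [IsStrictOrderedRing α]
    {a b c d : α} (hb : 0 ≤ b) (hc : 0 ≤ c) (hd : 0 < d) (h : a * d ≤ b * c) :
    a / b ≤ c / d := by
  rcases hb.eq_or_lt with rfl | hb
  · rw [div_zero]
    positivity
  · rwa [div_le_div_iff₀ hb hd, mul_comm c]

/-- Key inequality in the bipartite approximation bound: if
`C' ≥ K_s·w̲_I + (K_p − K_s)·w̲_J` and `C ≤ K_s·w̄_I + (K_p − K_s)·w̄_J` with
`0 < w̲_I ≤ w̄_I`, `0 < w̲_J ≤ w̄_J` and `K_s ≤ K_p`, then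
`C·w̲_I·w̲_J ≤ C'·w̄_I·w̄_J`, i.e. `C/C' ≤ (w̄_I·w̄_J)/(w̲_I·w̲_J)`. -/
theorem bipartite_key_inequality (Ks Kp : ℕ) (hK : Ks ≤ Kp)
    (wIl wIu wJl wJu C C' : ℝ)
    (hI0 : 0 < wIl) (hI : wIl ≤ wIu) (hJ0 : 0 < wJl) (hJ : wJl ≤ wJu)
    (hC' : (Ks : ℝ) * wIl + ((Kp : ℝ) - (Ks : ℝ)) * wJl ≤ C')
    (hC : C ≤ (Ks : ℝ) * wIu + ((Kp : ℝ) - (Ks : ℝ)) * wJu) :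
    C * (wIl * wJl) ≤ C' * (wIu * wJu) ∧
      C / C' ≤ (wIu * wJu) / (wIl * wJl) := by
  have hKs : (0 : ℝ) ≤ Ks := Nat.cast_nonneg Ks
  have hKps : (0 : ℝ) ≤ (Kp : ℝ) - Ks := sub_nonneg.mpr (Nat.cast_le.mpr hK)
  have hC'0 : 0 ≤ C' :=
    (add_nonneg (mul_nonneg hKs hI0.le) (mul_nonneg hKps hJ0.le)).trans hC'
  have hupper : 0 ≤ wIu * wJu := mul_nonneg (hI0.le.trans hI) (hJ0.le.trans hJ)
  have hprod : C * (wIl * wJl) ≤ C' * (wIu * wJu) :=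
    calc C * (wIl * wJl)
        ≤ ((Ks : ℝ) * wIu + ((Kp : ℝ) - Ks) * wJu) * (wIl * wJl) :=
          mul_le_mul_of_nonneg_right hC (by positivity)
      _ ≤ ((Ks : ℝ) * wIl + ((Kp : ℝ) - Ks) * wJl) * (wIu * wJu) :=
          combination_mul_le_combination_mul hKs hKps hI0.le hI hJ0.le hJ
      _ ≤ C' * (wIu * wJu) :=
          mul_le_mul_of_nonneg_right hC' hupper
  exact ⟨hprod, div_le_div_of_mul_le_mul hC'0 hupper (mul_pos hI0 hJ0) hprod⟩
end
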